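/- Let * : Ord × Ord → Ord be the naive transfinite extension of the second hyperoperation, defined by transfinite recursion on the second argument: α * 0 = 0; α * (β+1) = α + (α * β); and α * β = sup{α * γ : γ < β} for β a limit ordinal. Then the operation is eventually constant in its second argument: for every ordinal α and every ordinal β ≥ ω, α * β = α · ω, where · is standard ordinal multiplication. -/

import Mathlib

open Ordinal

/-- The naive transfinite extension of the second hyperoperation:
`α * 0 = 0`, `α * (β + 1) = α + (α * β)`, and `α * β = sup {α * γ : γ < β}`
for `β` a limit ordinal. -/
noncomputable def naiveMul (α β : Ordinal) : Ordinal :=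
  Ordinal.limitRecOn β 0 (fun _ IH => α + IH)
    (fun β _ IH => ⨆ γ : Set.Iio β, IH γ.1 γ.2)

/-!
Since `α + α · ω = α · ω`, induction on `β` shows `α * β ≤ α · ω` for every `β`, and on finite
arguments `*` is ordinary multiplication. For a limit `β ≥ ω` the supremum defining `α * β`
therefore contains every `α · n` and is bounded by `α · ω`, so it equals `α · ω`; each successor
step `α + α · ω` is absorbed again.
-/

section

variable (α : Ordinal)

@[simp]
theorem naiveMul_zero : naiveMul α 0 = 0 := by
  simp [naiveMul]

theorem naiveMul_add_one (β : Ordinal) : naiveMul α (β + 1) = α + naiveMul α β := by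
  rw [naiveMul, Ordinal.limitRecOn_add_one]
  rfl

theorem naiveMul_of_isSuccLimit {β : Ordinal} (hβ : Order.IsSuccLimit β) :
    naiveMul α β = ⨆ γ : Set.Iio β, naiveMul α γ := by
  rw [naiveMul, Ordinal.limitRecOn_limit _ _ _ _ hβ]
  rfl

theorem naiveMul_natCast (n : ℕ) : naiveMul α n = α * n := by
  induction n with
  | zero => simp
  | succ n ih =>
    rw [Nat.cast_succ, naiveMul_add_one, ih, ← mul_one_add, ← Nat.cast_one, ← Nat.cast_add,
      Nat.add_comm]

theorem naiveMul_le_mul_omega0 (β : Ordinal) : naiveMul α β ≤ α * ω := by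
  induction β using Ordinal.limitRecOn with
  | zero => simp
  | add_one β ih =>
    calc naiveMul α (β + 1) = α + naiveMul α β := naiveMul_add_one α β
      _ ≤ α + α * ω := by gcongr
      _ = α * ω := add_eq_right_iff_mul_omega0_le.2 le_rfl
  | limit β hβ ih =>
    have : Nonempty (Set.Iio β) := ⟨⟨0, hβ.bot_lt⟩⟩
    rw [naiveMul_of_isSuccLimit α hβ]
    exact ciSup_le fun γ => ih γ γ.2

theorem mul_omega0_le_naiveMul {β : Ordinal} (hβ : ω ≤ β) : α * ω ≤ naiveMul α β := by
  induction β using Ordinal.limitRecOn with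
  | zero => exact absurd hβ omega0_pos.not_ge
  | add_one β ih =>
    have hωβ : ω ≤ β := Order.lt_add_one_iff.1 <|
      hβ.lt_of_ne fun h => Order.not_isSuccLimit_add_one β (h ▸ isSuccLimit_omega0)
    rw [naiveMul_add_one]
    exact (ih hωβ).trans le_add_self
  | limit β hlim _ =>
    have hbdd : BddAbove (Set.range fun γ : Set.Iio β => naiveMul α γ) :=
      ⟨α * ω, Set.forall_mem_range.2 fun γ => naiveMul_le_mul_omega0 α γ⟩
    rw [naiveMul_of_isSuccLimit α hlim, mul_le_iff_of_isSuccLimit isSuccLimit_omega0]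
    intro γ hγ
    obtain ⟨n, rfl⟩ := lt_omega0.1 hγ
    calc α * n = naiveMul α n := (naiveMul_natCast α n).symm
      _ ≤ _ := le_ciSup hbdd ⟨n, (natCast_lt_omega0 n).trans_le hβ⟩

end

/-- The naive transfinite extension of the second hyperoperation is eventually constant
in its second argument: for every ordinal `α` and every `β ≥ ω`, `α * β = α · ω`,
where `·` is standard ordinal multiplication. -/
theorem naiveMul_eq_mul_omega0 (α β : Ordinal) (hβ : ω ≤ β) :
    naiveMul α β = α * ω :=
  (naiveMul_le_mul_omega0 α β).antisymm (mul_omega0_le_naiveMul α hβ)
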